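/- Let ω = (ω₀, …, ω_{n+1}) be a primitive key sequence with n ≥ 1, ω₀ < ω₁, and α₁ ≥ 2, and set K := ω₀ + ω_{n+1} + 1 − Σ_{j=1}^{n} (α_j − 1)·ω_j. If K ≥ 1 and ω_{n+1} divides K, then K = ω_{n+1}, α₁ = 2, ω₁ = ω₀ + 1, α_j = 1 for all 2 ≤ j ≤ n, and (ω₀, ω₁) = (2, 3). -/

import Mathlib

/-- `dks ω k` is `gcd(|ω₀|, …, |ω_k|)`. -/
def dks (ω : ℕ → ℤ) (k : ℕ) : ℕ :=
  (Finset.range (k + 1)).gcd fun j => (ω j).natAbs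

/-- `alphaK ω k` is `α_k = d_{k−1}/d_k`. -/
def alphaK (ω : ℕ → ℤ) (k : ℕ) : ℕ := dks ω (k - 1) / dks ω k

/-- A key sequence `(ω₀, …, ω_{n+1})`. -/
def IsKeySequence (n : ℕ) (ω : ℕ → ℤ) : Prop :=
  1 ≤ ω 0 ∧ dks ω (n + 1) = 1 ∧
    ∀ k, 1 ≤ k → k ≤ n → ω (k + 1) < (alphaK ω k : ℤ) * ω k

/-- A key sequence is primitive iff `ω_{n+1} > 0`. -/
def IsPrimitive (n : ℕ) (ω : ℕ → ℤ) : Prop := 0 < ω (n + 1)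

/-!
Every `ω_k` is positive (downward from `ω_{n+1} > 0`, since `ω_{k+1} < α_k ω_k`) and every
`α_k ≥ 1`, so all terms of the sum are nonnegative and the `j = 1` term alone is at least
`ω₁ ≥ ω₀ + 1`. Hence `K ≤ ω_{n+1}`, while `ω_{n+1} ∣ K` with `K ≥ 1` gives `K ≥ ω_{n+1}`.
Equality forces `(α₁ - 1) ω₁ = ω₁ = ω₀ + 1` and all other terms to vanish. Finally
`d₁ = gcd(ω₀, ω₀ + 1) = 1`, so `α₁ = d₀ / d₁ = ω₀`, i.e. `ω₀ = 2`.
-/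

open Finset

section Gcd

variable {ω : ℕ → ℤ}

lemma dks_zero (ω : ℕ → ℤ) : dks ω 0 = (ω 0).natAbs := by
  simp [dks]

lemma dks_pos (h0 : ω 0 ≠ 0) (k : ℕ) : 0 < dks ω k := by
  refine Nat.pos_of_ne_zero fun hk => h0 ?_
  simpa using (gcd_eq_zero_iff.mp hk) 0 (by simp)

lemma dks_dvd_dks {j k : ℕ} (h : j ≤ k) : dks ω k ∣ dks ω j :=
  gcd_mono (by simpa using h)

lemma dks_dvd_of_le {j k : ℕ} (h : j ≤ k) : (dks ω k : ℤ) ∣ ω j :=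
  Int.natCast_dvd.mpr (gcd_dvd (by simpa [Nat.lt_succ_iff] using h))

lemma one_le_alphaK (h0 : ω 0 ≠ 0) (k : ℕ) : 1 ≤ alphaK ω k :=
  Nat.div_pos (Nat.le_of_dvd (dks_pos h0 _) (dks_dvd_dks (Nat.sub_le k 1))) (dks_pos h0 k)

lemma dks_one_of_succ (h : ω 1 = ω 0 + 1) : dks ω 1 = 1 := by
  have hdvd : (dks ω 1 : ℤ) ∣ ω 1 - ω 0 :=
    dvd_sub (dks_dvd_of_le le_rfl) (dks_dvd_of_le zero_le_one)
  rw [h, add_sub_cancel_left] at hdvd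
  exact_mod_cast Int.eq_one_of_dvd_one (Int.natCast_nonneg _) hdvd

lemma alphaK_one_of_succ (h : ω 1 = ω 0 + 1) : alphaK ω 1 = (ω 0).natAbs := by
  rw [alphaK, dks_one_of_succ h, Nat.sub_self, dks_zero, Nat.div_one]

end Gcd

namespace IsKeySequence

variable {n : ℕ} {ω : ℕ → ℤ}

lemma pos (hω : IsKeySequence n ω) (hprim : IsPrimitive n ω) {k : ℕ} (hk : k ≤ n + 1) :
    0 < ω k := by
  induction hk using Nat.decreasingInduction with
  | self => exact hprim
  | of_succ k hk ih =>
    rcases Nat.eq_zero_or_pos k with rfl | hk1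
    · exact hω.1
    · exact pos_of_mul_pos_right (ih.trans (hω.2.2 k hk1 (by omega))) (Int.natCast_nonneg _)

lemma alphaK_sub_one_mul_nonneg (hω : IsKeySequence n ω) (hprim : IsPrimitive n ω) {j : ℕ}
    (hj : j ≤ n + 1) : 0 ≤ ((alphaK ω j : ℤ) - 1) * ω j :=
  mul_nonneg (by have := one_le_alphaK (ω := ω) (by linarith [hω.1]) j; omega)
    (hω.pos hprim hj).le

lemma alphaK_eq_one_of_sum_eq_zero (hω : IsKeySequence n ω) (hprim : IsPrimitive n ω)
    {m : ℕ} (hsum : ∑ j ∈ Ioc m n, ((alphaK ω j : ℤ) - 1) * ω j = 0) {j : ℕ}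
    (hj : j ∈ Ioc m n) : alphaK ω j = 1 := by
  have hjn : j ≤ n + 1 := by have := (mem_Ioc.mp hj).2; omega
  have hterm := (sum_eq_zero_iff_of_nonneg fun i hi =>
    hω.alphaK_sub_one_mul_nonneg hprim (by have := (mem_Ioc.mp hi).2; omega)).mp hsum j hj
  rcases mul_eq_zero.mp hterm with h | h
  · omega
  · exact absurd h (hω.pos hprim hjn).ne'

end IsKeySequence

/-- For a primitive key sequence with `n ≥ 1`, `ω₀ < ω₁`, `α₁ ≥ 2`, and
`K := ω₀ + ω_{n+1} + 1 − Σ_{j=1}^{n} (α_j − 1)·ω_j`: if `K ≥ 1` and `ω_{n+1} ∣ K`,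
then `K = ω_{n+1}`, `α₁ = 2`, `ω₁ = ω₀ + 1`, `α_j = 1` for `2 ≤ j ≤ n`, and
`(ω₀, ω₁) = (2, 3)`. -/
theorem stmt9 (n : ℕ) (ω : ℕ → ℤ) (hω : IsKeySequence n ω) (hprim : IsPrimitive n ω)
    (hn : 1 ≤ n) (h01 : ω 0 < ω 1) (hα : 2 ≤ alphaK ω 1) (K : ℤ)
    (hK : K = ω 0 + ω (n + 1) + 1 - ∑ j ∈ Finset.Icc 1 n, ((alphaK ω j : ℤ) - 1) * ω j)
    (hK1 : 1 ≤ K) (hdvd : ω (n + 1) ∣ K) :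
    K = ω (n + 1) ∧ alphaK ω 1 = 2 ∧ ω 1 = ω 0 + 1 ∧
      (∀ j, 2 ≤ j → j ≤ n → alphaK ω j = 1) ∧ ω 0 = 2 ∧ ω 1 = 3 := by
  rw [← add_sum_Ioc_eq_sum_Icc hn] at hK
  set rest := ∑ j ∈ Ioc 1 n, ((alphaK ω j : ℤ) - 1) * ω j
  have hrest : 0 ≤ rest := sum_nonneg fun j hj =>
    hω.alphaK_sub_one_mul_nonneg hprim (by have := (mem_Ioc.mp hj).2; omega)
  have hω1 : 0 < ω 1 := hω.pos hprim (by omega)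
  have hfirst : ω 1 ≤ ((alphaK ω 1 : ℤ) - 1) * ω 1 := by
    have : (2 : ℤ) ≤ alphaK ω 1 := by exact_mod_cast hα
    nlinarith
  have hKeq : K = ω (n + 1) := le_antisymm (by linarith) (Int.le_of_dvd (by omega) hdvd)
  have hsucc : ω 1 = ω 0 + 1 := by linarith
  have hα1 : alphaK ω 1 = 2 := by
    have : ((alphaK ω 1 : ℤ) - 1) * ω 1 = ω 1 := by linarith
    have := (mul_eq_right₀ hω1.ne').mp this
    omega
  have hω0 : ω 0 = 2 := by
    have := alphaK_one_of_succ hsucc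
    omega
  refine ⟨hKeq, hα1, hsucc, fun j h2j hjn => ?_, hω0, by omega⟩
  exact hω.alphaK_eq_one_of_sum_eq_zero hprim (by linarith) (mem_Ioc.mpr ⟨h2j, hjn⟩)
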